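/- arXiv:1709.10002 — 2 statements merged into one kernel-verified Lean document; each statement's English description precedes it below -/
import Mathlib

section
/- Let μ, α, β, a be real numbers and n ≥ 2 a positive integer satisfying: α ≥ β; μ + α + (n−2)β ≥ 0; μα + (n−2)μβ − (n−1)a² ≥ 0; μ + (n−1)α > 0; and (α − β)·[μα + (n−2)μβ − (n−1)a²] = 0. If moreover α = β and μα ≠ a², then g(x₁,…,xₙ) = 0 if and only if x₁ = 0 and ∑_{i=2}^{n} xᵢ = 0. -/
/-! When `α = β`, `g` only sees `x₁` and `S = ∑_{i≥2} xᵢ`: it is the binary form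
`μ x₁² + 2a x₁ S + α S²`. Its determinant `μα - a²` is positive, since the hypothesis on
`μα + (n-2)μβ - (n-1)a²` becomes `(n - 1)(μα - a²) ≥ 0` and `μα ≠ a²`. A binary form with
positive determinant is definite, so it vanishes only at `x₁ = S = 0`. -/

open Finset

/-- The quadratic form
`g(x₁,…,xₙ) = μx₁² + α·∑_{i=2}^{n} xᵢ² + 2a·∑_{i=2}^{n} x₁xᵢ + 2β·∑_{2≤i<j≤n} xᵢxⱼ`. -/
def quadFormG (n : ℕ) (μ α β a : ℝ) (x : ℕ → ℝ) : ℝ :=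
    μ * x 1 ^ 2 + α * ∑ i ∈ Icc 2 n, x i ^ 2
    + 2 * a * ∑ i ∈ Icc 2 n, x 1 * x i
    + 2 * β * ∑ i ∈ Icc 2 n, ∑ j ∈ Icc (i + 1) n, x i * x j

theorem sq_sum_Icc {R : Type*} [CommSemiring R] (x : ℕ → R) (m n : ℕ) :
    (∑ i ∈ Icc m n, x i) ^ 2
      = ∑ i ∈ Icc m n, x i ^ 2 + 2 * ∑ i ∈ Icc m n, ∑ j ∈ Icc (i + 1) n, x i * x j := by
  rcases lt_or_ge n m with h | h
  · simp [Icc_eq_empty_of_lt h]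
  · rw [← insert_Icc_add_one_left_eq_Icc h]
    have hm : m ∉ Icc (m + 1) n := by simp
    rw [sum_insert hm, sum_insert hm, sum_insert hm, ← mul_sum, add_sq, sq_sum_Icc x (m + 1) n]
    ring
termination_by n + 1 - m

theorem quadFormG_of_eq (n : ℕ) (μ α a : ℝ) (x : ℕ → ℝ) :
    quadFormG n μ α α a x
      = μ * x 1 ^ 2 + 2 * a * x 1 * ∑ i ∈ Icc 2 n, x i + α * (∑ i ∈ Icc 2 n, x i) ^ 2 := by
  rw [quadFormG, sq_sum_Icc, ← mul_sum]
  ring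

theorem binary_form_eq_zero_iff {μ α a : ℝ} (hdet : a ^ 2 < μ * α) (u v : ℝ) :
    μ * u ^ 2 + 2 * a * u * v + α * v ^ 2 = 0 ↔ u = 0 ∧ v = 0 := by
  refine ⟨fun h ↦ ?_, fun ⟨hu, hv⟩ ↦ by simp [hu, hv]⟩
  have hμ : μ ≠ 0 := by rintro rfl; nlinarith [sq_nonneg a]
  have hsum : (μ * u + a * v) ^ 2 + (μ * α - a ^ 2) * v ^ 2 = 0 := by
    linear_combination μ * h
  have hv : v = 0 := by
    have : (μ * α - a ^ 2) * v ^ 2 = 0 := by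
      nlinarith [sq_nonneg (μ * u + a * v), mul_nonneg (sub_nonneg.mpr hdet.le) (sq_nonneg v)]
    simpa [(sub_pos.mpr hdet).ne'] using this
  subst hv
  exact ⟨by simpa [hμ] using hsum, rfl⟩

theorem quadFormG_eq_zero_iff_B2_general (n : ℕ) (μ α β a : ℝ)
    (hn : 2 ≤ n)
    (hA3 : μ * α + ((n : ℝ) - 2) * μ * β - ((n : ℝ) - 1) * a ^ 2 ≥ 0)
    (hb1 : α = β) (hb2 : μ * α ≠ a ^ 2) :
    ∀ x : ℕ → ℝ, quadFormG n μ α β a x = 0 ↔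
      x 1 = 0 ∧ ∑ i ∈ Icc 2 n, x i = 0 := by
  subst hb1
  have hn1 : (0 : ℝ) < n - 1 := by
    have : (2 : ℝ) ≤ n := by exact_mod_cast hn
    linarith
  have hle : 0 ≤ μ * α - a ^ 2 :=
    nonneg_of_mul_nonneg_right (by linear_combination hA3) hn1
  have hdet : a ^ 2 < μ * α := lt_of_le_of_ne (sub_nonneg.mp hle) hb2.symm
  intro x
  rw [quadFormG_of_eq]
  exact binary_form_eq_zero_iff hdet _ _

theorem quadFormG_eq_zero_iff_B2 (n : ℕ) (μ α β a : ℝ)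
    (hn : 2 ≤ n)
    (hA1 : α ≥ β)
    (hA2 : μ + α + ((n : ℝ) - 2) * β ≥ 0)
    (hA3 : μ * α + ((n : ℝ) - 2) * μ * β - ((n : ℝ) - 1) * a ^ 2 ≥ 0)
    (hA4 : μ + ((n : ℝ) - 1) * α > 0)
    (hA5 : (α - β) * (μ * α + ((n : ℝ) - 2) * μ * β - ((n : ℝ) - 1) * a ^ 2) = 0)
    (hb1 : α = β) (hb2 : μ * α ≠ a ^ 2) :
    ∀ x : ℕ → ℝ, quadFormG n μ α β a x = 0 ↔
      x 1 = 0 ∧ ∑ i ∈ Icc 2 n, x i = 0 :=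
  quadFormG_eq_zero_iff_B2_general n μ α β a hn hA3 hb1 hb2
end

section
/- For any real numbers x₁,…,xₙ with n ≥ 3, one has −(n−2)x₁² − (n−1)·∑_{i=3}^{n} xᵢ² + (n−2)·∑_{i=2}^{n} x₁xᵢ + (n−1)·∑_{2≤i<j≤n} xᵢxⱼ ≤ ((3n−1)(n−2)/(2(3n+5)))·(∑_{i=1}^{n} xᵢ)², and equality holds if and only if x₃ = ⋯ = xₙ = (3/2)x₁ and x₂ = (9/2)x₁. -/
/-!
With `T` and `Q` the sum and the sum of squares of `x₃,…,xₙ`, the left side depends only on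
`x₁, x₂, T, Q`, since `2 ∑_{2≤i<j≤n} xᵢxⱼ = (x₂ + T)² - x₂² - Q`. After clearing denominators,
the right side minus the left side is a sum of three nonnegative terms: a multiple of the
Cauchy–Schwarz defect `(n-2)Q - T²` and two squares obtained by completing the square in `x₂` and
in `x₁`. It vanishes iff `x₃ = ⋯ = xₙ`, `2T = 3(n-2)x₁` and `2x₂ = 9x₁`.
-/

open Finset

theorem sum_Icc_eq_add_sum_Icc_add_one {M : Type*} [AddCommMonoid M] (f : ℕ → M) {a b : ℕ}
    (h : a ≤ b) : ∑ i ∈ Icc a b, f i = f a + ∑ i ∈ Icc (a + 1) b, f i := by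
  rw [← insert_Icc_add_one_left_eq_Icc h, sum_insert (by simp)]

theorem two_mul_sum_Icc_sum_Icc_mul_eq_sq_sum_sub_sum_sq {R : Type*} [CommRing R] (x : ℕ → R)
    (a n : ℕ) :
    2 * ∑ i ∈ Icc a n, ∑ j ∈ Icc (i + 1) n, x i * x j
      = (∑ i ∈ Icc a n, x i) ^ 2 - ∑ i ∈ Icc a n, x i ^ 2 := by
  rcases lt_or_ge n a with h | h
  · simp [Icc_eq_empty_of_lt h]
  · rw [sum_Icc_eq_add_sum_Icc_add_one _ h, sum_Icc_eq_add_sum_Icc_add_one _ h,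
      sum_Icc_eq_add_sum_Icc_add_one _ h, ← mul_sum]
    linear_combination two_mul_sum_Icc_sum_Icc_mul_eq_sq_sum_sub_sum_sq x (a + 1) n
termination_by n + 1 - a

theorem sum_sq_card_mul_sub_sum {ι R : Type*} [CommRing R] (s : Finset ι) (x : ι → R) :
    ∑ i ∈ s, (#s * x i - ∑ j ∈ s, x j) ^ 2
      = #s * (#s * ∑ i ∈ s, x i ^ 2 - (∑ i ∈ s, x i) ^ 2) := by
  simp only [sub_sq, sum_add_distrib, sum_sub_distrib, mul_pow, ← sum_mul, ← mul_sum, sum_const,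
    nsmul_eq_mul]
  ring

theorem forall_mem_eq_iff_card_mul_sum_sq_eq_and_sum_eq {ι K : Type*} [Field K] [LinearOrder K]
    [IsStrictOrderedRing K] (s : Finset ι) (x : ι → K) (c : K) :
    (#s * ∑ i ∈ s, x i ^ 2 = (∑ i ∈ s, x i) ^ 2 ∧ ∑ i ∈ s, x i = #s * c) ↔ ∀ i ∈ s, x i = c := by
  constructor
  · rintro ⟨hvar, hsum⟩ i hi
    have hcard : (#s : K) ≠ 0 := by simpa using ne_empty_of_mem hi
    have hdev : ∀ j ∈ s, (#s * x j - ∑ k ∈ s, x k) ^ 2 = 0 :=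
      (sum_eq_zero_iff_of_nonneg fun j _ => sq_nonneg _).mp
        (by rw [sum_sq_card_mul_sub_sum, hvar, sub_self, mul_zero])
    have := pow_eq_zero_iff two_ne_zero |>.mp (hdev i hi)
    rw [hsum, sub_eq_zero] at this
    exact mul_left_cancel₀ hcard this
  · intro h
    rw [sum_congr rfl h, sum_congr rfl fun i hi => by rw [h i hi]]
    simp only [sum_const, nsmul_eq_mul, and_true]
    ring

section

/- `a = x₁`, `b = x₂`, `ν = n`, and `T`, `Q`, `P` stand for the sum and the sum of squares of
`x₃,…,xₙ` and for `∑_{2≤i<j≤n} xᵢxⱼ`. -/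
variable {ν a b T Q P : ℝ}

theorem oprea_form_sos_identity (hν : 3 * ν + 5 ≠ 0) (hP : 2 * P = (b + T) ^ 2 - (b ^ 2 + Q)) :
    8 * (ν - 2) * (3 * ν - 1) * (3 * ν + 5) *
      ((3 * ν - 1) * (ν - 2) / (2 * (3 * ν + 5)) * (a + (b + T)) ^ 2
        - (-(ν - 2) * a ^ 2 - (ν - 1) * Q + (ν - 2) * (a * b + a * T) + (ν - 1) * P))
      = 12 * (ν - 1) * (3 * ν - 1) * (3 * ν + 5) * ((ν - 2) * Q - T ^ 2)
        + ((ν - 2) * (3 * ν - 1) * (9 * a - 2 * b) - (9 * ν - 7) * (3 * (ν - 2) * a - 2 * T)) ^ 2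
        + 4 * (ν - 1) * (3 * ν + 5) * (3 * (ν - 2) * a - 2 * T) ^ 2 := by
  have hc : (3 * ν - 1) * (ν - 2) / (2 * (3 * ν + 5)) * (2 * (3 * ν + 5)) = (3 * ν - 1) * (ν - 2) :=
    div_mul_cancel₀ _ (mul_ne_zero two_ne_zero hν)
  linear_combination (4 * (ν - 2) * (3 * ν - 1) * (a + (b + T)) ^ 2) * hc
    - 4 * (ν - 2) * (3 * ν - 1) * (3 * ν + 5) * (ν - 1) * hP

theorem oprea_form_le_and_eq_iff (hν : 2 < ν) (hP : 2 * P = (b + T) ^ 2 - (b ^ 2 + Q))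
    (hQ : T ^ 2 ≤ (ν - 2) * Q) :
    -(ν - 2) * a ^ 2 - (ν - 1) * Q + (ν - 2) * (a * b + a * T) + (ν - 1) * P
        ≤ (3 * ν - 1) * (ν - 2) / (2 * (3 * ν + 5)) * (a + (b + T)) ^ 2 ∧
      (-(ν - 2) * a ^ 2 - (ν - 1) * Q + (ν - 2) * (a * b + a * T) + (ν - 1) * P
        = (3 * ν - 1) * (ν - 2) / (2 * (3 * ν + 5)) * (a + (b + T)) ^ 2 ↔
        ((ν - 2) * Q = T ^ 2 ∧ T = (ν - 2) * (3 / 2 * a)) ∧ b = 9 / 2 * a) := by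
  have h₂ : 0 < ν - 2 := by linarith
  have h₁ : 0 < ν - 1 := by linarith
  have h₃ : 0 < 3 * ν - 1 := by linarith
  have h₅ : 0 < 3 * ν + 5 := by linarith
  have hfac : 0 < 8 * (ν - 2) * (3 * ν - 1) * (3 * ν + 5) := by positivity
  have key := oprea_form_sos_identity (ν := ν) (a := a) h₅.ne' hP
  have hA : 0 ≤ 12 * (ν - 1) * (3 * ν - 1) * (3 * ν + 5) * ((ν - 2) * Q - T ^ 2) := by
    have := sub_nonneg.2 hQ
    positivity
  have hC : 0 ≤ 4 * (ν - 1) * (3 * ν + 5) * (3 * (ν - 2) * a - 2 * T) ^ 2 := by positivity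
  constructor
  · rw [← sub_nonneg]
    refine nonneg_of_mul_nonneg_right ?_ hfac
    rw [key]
    positivity
  · rw [eq_comm, ← sub_eq_zero, ← mul_right_inj' hfac.ne', mul_zero, key,
      add_eq_zero_iff_of_nonneg (by positivity) hC, add_eq_zero_iff_of_nonneg hA (sq_nonneg _)]
    simp only [mul_eq_zero, OfNat.ofNat_ne_zero, h₁.ne', h₃.ne', h₅.ne', pow_eq_zero_iff, ne_eq,
      not_false_eq_true, false_or, sub_eq_zero]
    constructor
    · rintro ⟨⟨hD, hX⟩, hY⟩
      rw [← hY, sub_self, mul_zero] at hX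
      have hb := (mul_eq_zero.1 hX).resolve_left (by positivity)
      exact ⟨⟨hD, by linarith⟩, by linarith⟩
    · rintro ⟨⟨hD, hT⟩, hb⟩
      have hY : 3 * (ν - 2) * a = 2 * T := by rw [hT]; ring
      refine ⟨⟨hD, ?_⟩, hY⟩
      rw [← hY, hb]
      ring

end

/-- For real `x₁,…,xₙ` with `n ≥ 3`:
`−(n−2)x₁² − (n−1)∑_{i=3}^{n} xᵢ² + (n−2)∑_{i=2}^{n} x₁xᵢ + (n−1)∑_{2≤i<j≤n} xᵢxⱼ
  ≤ ((3n−1)(n−2)/(2(3n+5)))·(∑_{i=1}^{n} xᵢ)²`,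
with equality iff `x₃ = ⋯ = xₙ = (3/2)x₁` and `x₂ = (9/2)x₁`. -/
theorem oprea_ineq_eq3_2 (n : ℕ) (hn : 3 ≤ n) (x : ℕ → ℝ) :
    -((n : ℝ) - 2) * x 1 ^ 2
      - ((n : ℝ) - 1) * (∑ i ∈ Icc 3 n, x i ^ 2)
      + ((n : ℝ) - 2) * (∑ i ∈ Icc 2 n, x 1 * x i)
      + ((n : ℝ) - 1) * (∑ i ∈ Icc 2 n, ∑ j ∈ Icc (i + 1) n, x i * x j) ≤
      (3 * (n : ℝ) - 1) * ((n : ℝ) - 2) / (2 * (3 * (n : ℝ) + 5)) * (∑ i ∈ Icc 1 n, x i) ^ 2 ∧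
    (-((n : ℝ) - 2) * x 1 ^ 2
        - ((n : ℝ) - 1) * (∑ i ∈ Icc 3 n, x i ^ 2)
        + ((n : ℝ) - 2) * (∑ i ∈ Icc 2 n, x 1 * x i)
        + ((n : ℝ) - 1) * (∑ i ∈ Icc 2 n, ∑ j ∈ Icc (i + 1) n, x i * x j) =
        (3 * (n : ℝ) - 1) * ((n : ℝ) - 2) / (2 * (3 * (n : ℝ) + 5)) * (∑ i ∈ Icc 1 n, x i) ^ 2 ↔
      (∀ i ∈ Icc 3 n, x i = 3 / 2 * x 1) ∧ x 2 = 9 / 2 * x 1) := by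
  have hcard : ((#(Icc 3 n) : ℕ) : ℝ) = n - 2 := by
    rw [Nat.card_Icc, Nat.cast_sub (by omega)]
    push_cast
    ring
  have hsplit : ∀ f : ℕ → ℝ, ∑ i ∈ Icc 2 n, f i = f 2 + ∑ i ∈ Icc 3 n, f i :=
    fun f => sum_Icc_eq_add_sum_Icc_add_one f (by omega)
  have hpairs := two_mul_sum_Icc_sum_Icc_mul_eq_sq_sum_sub_sum_sq x 2 n
  rw [hsplit x, hsplit (fun i => x i ^ 2)] at hpairs
  have hbound := sq_sum_le_card_mul_sum_sq (s := Icc 3 n) (f := x)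
  rw [hcard] at hbound
  rw [sum_Icc_eq_add_sum_Icc_add_one _ (by omega : 1 ≤ n), hsplit x, hsplit (fun i => x 1 * x i),
    ← mul_sum]
  obtain ⟨hle, heq⟩ := oprea_form_le_and_eq_iff (by exact_mod_cast hn) hpairs hbound
  refine ⟨hle, heq.trans ?_⟩
  rw [← forall_mem_eq_iff_card_mul_sum_sq_eq_and_sum_eq, hcard]
end
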